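/- Let R, R̂ ∈ SO(3) and r_m, r_a ∈ ℝ³ with r_m ≠ 0 and r_m × r_a ≠ 0, and set b_m = Rᵀr_m, b_a = Rᵀr_a. Then Φ₀(R̂, b_m, b_a, r_a) := 3 − r_mᵀ R̂ b_m/‖b_m‖² − (r_m × r_a)ᵀ R̂ (b_m × b_a)/‖b_m × b_a‖² − (r_m × (r_m × r_a))ᵀ R̂ (b_m × (b_m × b_a))/‖b_m × (b_m × b_a)‖² equals tr(I − RR̂ᵀ) = 4|RR̂ᵀ|_I². -/

import Mathlib

/-!
For `u ⊥ v` nonzero, `u, v, u × v` is an orthogonal frame, so the normalized quadratic forms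
`xᵀ M x / ‖x‖²` along it add up to `tr M`. Rotations preserve dot and cross products, so
`b_m, b_m × b_a, b_m × (b_m × b_a)` is the image under `Rᵀ` of the frame built from
`r_m, r_m × r_a`, and the three quotients in `Φ₀` are the quadratic forms of `R̂ Rᵀ` along it.
Hence `Φ₀ = 3 - tr(R̂ Rᵀ) = tr(I - R R̂ᵀ)`.
-/

open Matrix

/-- `R ∈ SO(3)`: `R Rᵀ = I` and `det R = 1`. -/
def IsSO3 (R : Matrix (Fin 3) (Fin 3) ℝ) : Prop := R * Rᵀ = 1 ∧ R.det = 1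

/-- Squared normalized Euclidean distance on SO(3): `|R|_I² = (1/4) tr(I - R)`. -/
noncomputable def distI2 (R : Matrix (Fin 3) (Fin 3) ℝ) : ℝ :=
  (1/4) * Matrix.trace (1 - R)

/-- The measurable cost
`Φ₀(R̂, b_m, b_a, r) = 3 - r_mᵀR̂b_m/‖b_m‖² - (r_m×r)ᵀR̂(b_m×b_a)/‖b_m×b_a‖²
  - (r_m×(r_m×r))ᵀR̂(b_m×(b_m×b_a))/‖b_m×(b_m×b_a)‖²` (with `r_m` the inertial
magnetic field vector). -/
noncomputable def Phi0 (Rh : Matrix (Fin 3) (Fin 3) ℝ) (rm bm ba r : Fin 3 → ℝ) : ℝ :=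
  3 - (rm ⬝ᵥ Rh.mulVec bm) / (bm ⬝ᵥ bm)
    - ((rm ⨯₃ r) ⬝ᵥ Rh.mulVec (bm ⨯₃ ba)) / ((bm ⨯₃ ba) ⬝ᵥ (bm ⨯₃ ba))
    - ((rm ⨯₃ (rm ⨯₃ r)) ⬝ᵥ Rh.mulVec (bm ⨯₃ (bm ⨯₃ ba))) /
        ((bm ⨯₃ (bm ⨯₃ ba)) ⬝ᵥ (bm ⨯₃ (bm ⨯₃ ba)))

section

variable {K : Type*}

lemma quadForm_add_quadForm_add_quadForm_cross [CommRing K] (M : Matrix (Fin 3) (Fin 3) K)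
    (u v : Fin 3 → K) :
    (u ⬝ᵥ M *ᵥ u) * (v ⬝ᵥ v) + (v ⬝ᵥ M *ᵥ v) * (u ⬝ᵥ u) + (u ⨯₃ v) ⬝ᵥ M *ᵥ (u ⨯₃ v)
      = M.trace * (u ⬝ᵥ u) * (v ⬝ᵥ v)
        + (u ⬝ᵥ v) * (u ⬝ᵥ M *ᵥ v + v ⬝ᵥ M *ᵥ u - M.trace * (u ⬝ᵥ v)) := by
  simp only [dotProduct, mulVec, cross_apply, trace, diag, Fin.sum_univ_three, Fin.isValue,
    Matrix.cons_val_zero, Matrix.cons_val_one, Matrix.cons_val_two, Matrix.head_cons,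
    Matrix.tail_cons]
  ring

lemma trace_eq_sum_div_of_dotProduct_eq_zero [Field K] (M : Matrix (Fin 3) (Fin 3) K)
    {u v : Fin 3 → K} (huv : u ⬝ᵥ v = 0) (hu : u ⬝ᵥ u ≠ 0) (hv : v ⬝ᵥ v ≠ 0) :
    M.trace = (u ⬝ᵥ M *ᵥ u) / (u ⬝ᵥ u) + (v ⬝ᵥ M *ᵥ v) / (v ⬝ᵥ v)
      + ((u ⨯₃ v) ⬝ᵥ M *ᵥ (u ⨯₃ v)) / ((u ⨯₃ v) ⬝ᵥ (u ⨯₃ v)) := by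
  have hcross : (u ⨯₃ v) ⬝ᵥ (u ⨯₃ v) = (u ⬝ᵥ u) * (v ⬝ᵥ v) := by
    rw [cross_dot_cross, dotProduct_comm v u, huv]
    ring
  have hframe := quadForm_add_quadForm_add_quadForm_cross M u v
  rw [huv, zero_mul, add_zero] at hframe
  rw [hcross]
  field_simp
  linear_combination -hframe

lemma cross_mulVec_mulVec [CommRing K] (A : Matrix (Fin 3) (Fin 3) K) (u v : Fin 3 → K) :
    (A *ᵥ u) ⨯₃ (A *ᵥ v) = (adjugate A)ᵀ *ᵥ (u ⨯₃ v) := by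
  funext i
  fin_cases i <;>
    simp only [Fin.zero_eta, Fin.mk_one, Fin.reduceFinMk, Fin.isValue, cross_apply, mulVec,
      dotProduct, Fin.sum_univ_three, adjugate_fin_three, transpose_apply, of_apply, cons_val',
      cons_val_fin_one, cons_val_zero, cons_val_one, cons_val] <;>
    ring

lemma dotProduct_mulVec_mulVec_of_transpose_mul_self {n : Type*} [Fintype n] [DecidableEq n] [CommRing K]
    {Q : Matrix n n K} (hQ : Qᵀ * Q = 1) (x y : n → K) : Q *ᵥ x ⬝ᵥ Q *ᵥ y = x ⬝ᵥ y := by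
  rw [← vecMul_transpose, ← dotProduct_mulVec, mulVec_mulVec, hQ, one_mulVec]

end

lemma IsSO3.transpose {R : Matrix (Fin 3) (Fin 3) ℝ} (hR : IsSO3 R) : IsSO3 Rᵀ :=
  ⟨by rw [transpose_transpose]; exact mul_eq_one_comm.mp hR.1, by rw [det_transpose]; exact hR.2⟩

lemma IsSO3.adjugate_eq_transpose {R : Matrix (Fin 3) (Fin 3) ℝ} (hR : IsSO3 R) :
    adjugate R = Rᵀ := by
  calc adjugate R = adjugate R * (R * Rᵀ) := by rw [hR.1, Matrix.mul_one]
    _ = Rᵀ := by rw [← Matrix.mul_assoc, adjugate_mul, hR.2, one_smul, Matrix.one_mul]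

lemma IsSO3.cross_mulVec_mulVec {R : Matrix (Fin 3) (Fin 3) ℝ} (hR : IsSO3 R)
    (u v : Fin 3 → ℝ) : (R *ᵥ u) ⨯₃ (R *ᵥ v) = R *ᵥ (u ⨯₃ v) := by
  rw [_root_.cross_mulVec_mulVec, hR.adjugate_eq_transpose, transpose_transpose]

lemma Phi0_mulVec_eq {Q : Matrix (Fin 3) (Fin 3) ℝ} (hQ : IsSO3 Q) (Rh : Matrix (Fin 3) (Fin 3) ℝ)
    {rm ra : Fin 3 → ℝ} (hrm : rm ≠ 0) (hcross : rm ⨯₃ ra ≠ 0) :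
    Phi0 Rh rm (Q *ᵥ rm) (Q *ᵥ ra) ra = 3 - (Rh * Q).trace := by
  have hdot := dotProduct_mulVec_mulVec_of_transpose_mul_self (mul_eq_one_comm.mp hQ.1)
  have hframe := trace_eq_sum_div_of_dotProduct_eq_zero (Rh * Q) (dot_self_cross rm ra)
    (fun h => hrm (dotProduct_self_eq_zero.mp h)) (fun h => hcross (dotProduct_self_eq_zero.mp h))
  rw [Phi0, hQ.cross_mulVec_mulVec, hQ.cross_mulVec_mulVec, hdot, hdot, hdot,
    mulVec_mulVec, mulVec_mulVec, mulVec_mulVec, hframe]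
  ring

theorem stmt12 (R Rh : Matrix (Fin 3) (Fin 3) ℝ) (hR : IsSO3 R)
    (rm ra : Fin 3 → ℝ) (hrm : rm ≠ 0) (hcross : rm ⨯₃ ra ≠ 0) :
    Phi0 Rh rm (Rᵀ.mulVec rm) (Rᵀ.mulVec ra) ra = Matrix.trace (1 - R * Rhᵀ) ∧
    Phi0 Rh rm (Rᵀ.mulVec rm) (Rᵀ.mulVec ra) ra = 4 * distI2 (R * Rhᵀ) := by
  have hphi := Phi0_mulVec_eq hR.transpose Rh hrm hcross
  have htrace : (Rh * Rᵀ).trace = (R * Rhᵀ).trace := by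
    rw [← trace_transpose, transpose_mul, transpose_transpose]
  have hdiff : Matrix.trace (1 - R * Rhᵀ) = 3 - (R * Rhᵀ).trace := by
    rw [trace_sub, trace_one, Fintype.card_fin]
    norm_num
  refine ⟨?_, ?_⟩ <;> rw [hphi, htrace]
  · exact hdiff.symm
  · rw [distI2, hdiff]
    ring
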